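/- arXiv:2310.13460 — 2 statements merged into one kernel-verified Lean document; each statement's English description precedes it below -/
import Mathlib

section
/- For all integers m, n, the derivative of Θ at the lattice point m + nτ equals (−1)^{m+n}·exp(−πin²τ); in particular this derivative is nonzero, so every zero of Θ is a simple (order one) zero. -/
open Complex

/-- The (additive) Jacobi theta function associated to `τ`:
`Θ(z) = (1/(2πi))·(exp(πiz) − exp(−πiz)) · ∏_{s≥1} (1 − q^s e^{2πiz})(1 − q^s e^{−2πiz}) · (∏_{s≥1}(1 − q^s))^{−2}`
where `q = exp(2πiτ)`. -/
noncomputable def Theta (τ : ℂ) (z : ℂ) : ℂ :=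
  (1 / (2 * (Real.pi : ℂ) * I)) *
    (exp ((Real.pi : ℂ) * I * z) - exp (-((Real.pi : ℂ) * I * z))) *
    (∏' s : ℕ, ((1 - exp (2 * (Real.pi : ℂ) * I * τ) ^ (s + 1) * exp (2 * (Real.pi : ℂ) * I * z)) *
                 (1 - exp (2 * (Real.pi : ℂ) * I * τ) ^ (s + 1) * exp (-(2 * (Real.pi : ℂ) * I * z))))) *
    ((∏' s : ℕ, (1 - exp (2 * (Real.pi : ℂ) * I * τ) ^ (s + 1)))⁻¹) ^ 2


section ThetaAux

open Complex Filter Topology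

/-- If some factor is zero, the product has value 0. -/
lemma hasProd_zero_of_eq_zero {f : ℕ → ℂ} {b : ℕ} (h : f b = 0) : HasProd f 0 := by
  have : Tendsto (fun _ : Finset ℕ => (0 : ℂ)) atTop (𝓝 0) := tendsto_const_nhds
  refine this.congr' ?_
  filter_upwards [eventually_ge_atTop {b}] with s hs
  exact (Finset.prod_eq_zero (hs (Finset.mem_singleton_self b)) h).symm

lemma logSummable {q : ℂ} (hq : ‖q‖ < 1) (c : ℂ) :
    Summable fun s : ℕ => Complex.log (1 - q ^ (s + 1) * c) := by
  have h0 : (0:ℝ) ≤ ‖q‖ := norm_nonneg q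
  obtain ⟨N, hN⟩ : ∃ N : ℕ, ‖q‖ ^ N * ‖c‖ < 1 / 2 := by
    have := (tendsto_pow_atTop_nhds_zero_of_lt_one h0 hq).mul_const ‖c‖
    rw [zero_mul] at this
    exact ((this.eventually (gt_mem_nhds (by norm_num : (0:ℝ) < 1/2))).exists)
  rw [← summable_nat_add_iff N]
  apply Summable.of_norm_bounded (g := fun s => (3/2) * (‖q‖ ^ N * ‖c‖) * ‖q‖ ^ (s+1))
  · exact ((summable_geometric_of_lt_one h0 hq).comp_injective (add_left_injective 1)
      |>.mul_left _)
  · intro s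
    have hw : ‖-(q ^ (s + N + 1) * c)‖ ≤ ‖q‖ ^ (s + 1) * (‖q‖ ^ N * ‖c‖) := by
      rw [norm_neg, norm_mul, norm_pow]
      have : ‖q‖ ^ (s + N + 1) = ‖q‖ ^ (s + 1) * ‖q‖ ^ N := by
        rw [← pow_add]; ring_nf
      rw [this, mul_assoc]
    have hw2 : ‖-(q ^ (s + N + 1) * c)‖ ≤ 1/2 := by
      refine hw.trans ?_
      calc ‖q‖ ^ (s+1) * (‖q‖ ^ N * ‖c‖) ≤ 1 * (1/2) := by
            apply mul_le_mul (pow_le_one₀ h0 hq.le) hN.le (by positivity) one_pos.le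
        _ = 1/2 := one_mul _
    have : (1 : ℂ) - q ^ (s + N + 1) * c = 1 + -(q ^ (s + N + 1) * c) := by ring
    rw [this]
    refine (Complex.norm_log_one_add_half_le_self hw2).trans ?_
    calc (3/2) * ‖-(q ^ (s + N + 1) * c)‖ ≤ (3/2) * (‖q‖ ^ (s+1) * (‖q‖ ^ N * ‖c‖)) := by
          gcongr
      _ = 3/2 * (‖q‖ ^ N * ‖c‖) * ‖q‖ ^ (s+1) := by ring

lemma hasProdExp {q : ℂ} (hq : ‖q‖ < 1) (c : ℂ) (h : ∀ s : ℕ, 1 - q ^ (s + 1) * c ≠ 0) :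
    HasProd (fun s : ℕ => 1 - q ^ (s + 1) * c)
      (Complex.exp (∑' s : ℕ, Complex.log (1 - q ^ (s + 1) * c))) := by
  have h1 := (logSummable hq c).hasSum.cexp
  have h2 : (cexp ∘ fun s : ℕ => Complex.log (1 - q ^ (s + 1) * c)) =
      fun s : ℕ => 1 - q ^ (s + 1) * c := funext fun s => Complex.exp_log (h s)
  rwa [h2] at h1

lemma multF {q : ℂ} (hq : ‖q‖ < 1) (c : ℂ) :
    Multipliable fun s : ℕ => 1 - q ^ (s + 1) * c := by
  by_cases h : ∀ s : ℕ, 1 - q ^ (s + 1) * c ≠ 0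
  · exact (hasProdExp hq c h).multipliable
  · push_neg at h
    obtain ⟨s, hs⟩ := h
    exact (hasProd_zero_of_eq_zero hs).multipliable

lemma tprodF_ne {q : ℂ} (hq : ‖q‖ < 1) (c : ℂ) (h : ∀ s : ℕ, 1 - q ^ (s + 1) * c ≠ 0) :
    (∏' s : ℕ, (1 - q ^ (s + 1) * c)) ≠ 0 := by
  rw [(hasProdExp hq c h).tprod_eq]; exact Complex.exp_ne_zero _


lemma prodShiftA {q : ℂ} (hq : ‖q‖ < 1) (y : ℂ) :
    (∏' s : ℕ, (1 - q ^ (s + 1) * y)) =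
      (1 - q * y) * ∏' s : ℕ, (1 - q ^ (s + 1) * (q * y)) := by
  have hmul : Multipliable fun s : ℕ => 1 - q ^ (s + 1 + 1) * y :=
    (multF hq (q * y)).congr fun s => by rw [pow_succ]; ring
  have h := tprod_eq_zero_mul' (f := fun t : ℕ => 1 - q ^ (t + 1) * y) hmul
  rw [h]
  have h2 : (∏' s : ℕ, (1 - q ^ (s + 1 + 1) * y)) = ∏' s : ℕ, (1 - q ^ (s + 1) * (q * y)) :=
    tprod_congr fun s => by rw [pow_succ]; ring
  rw [pow_one, h2]

lemma prodShiftB {q : ℂ} (hq : ‖q‖ < 1) (hq0 : q ≠ 0) (y : ℂ) :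
    (∏' s : ℕ, (1 - q ^ (s + 1) * (q⁻¹ * y))) =
      (1 - y) * ∏' s : ℕ, (1 - q ^ (s + 1) * y) := by
  have hfun : (fun s : ℕ => 1 - q ^ (s + 1) * (q⁻¹ * y)) = fun s : ℕ => 1 - q ^ s * y := by
    funext s
    rw [pow_succ]
    field_simp
  rw [hfun]
  have h := tprod_eq_zero_mul' (f := fun t : ℕ => 1 - q ^ t * y) (multF hq y)
  rw [h, pow_zero, one_mul]



lemma norm_q_lt_one {τ : ℂ} (hτ : 0 < τ.im) : ‖exp (2 * (Real.pi : ℂ) * I * τ)‖ < 1 := by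
  rw [Complex.norm_exp]
  have h : (2 * (Real.pi : ℂ) * I * τ).re = -(2 * Real.pi * τ.im) := by
    simp [Complex.mul_re, Complex.mul_im]
  rw [h, Real.exp_lt_one_iff]
  have := Real.pi_pos
  nlinarith

lemma thetaEq (τ z : ℂ) (hτ : 0 < τ.im) :
    Theta τ z = (1 / (2 * (Real.pi : ℂ) * I)) *
      (exp ((Real.pi : ℂ) * I * z) - exp (-((Real.pi : ℂ) * I * z))) *
      ((∏' s : ℕ, (1 - exp (2 * (Real.pi : ℂ) * I * τ) ^ (s + 1) * exp (2 * (Real.pi : ℂ) * I * z))) *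
       (∏' s : ℕ, (1 - exp (2 * (Real.pi : ℂ) * I * τ) ^ (s + 1) * exp (-(2 * (Real.pi : ℂ) * I * z))))) *
      ((∏' s : ℕ, (1 - exp (2 * (Real.pi : ℂ) * I * τ) ^ (s + 1)))⁻¹) ^ 2 := by
  unfold Theta
  rw [Multipliable.tprod_mul (multF (norm_q_lt_one hτ) (exp (2 * (Real.pi:ℂ) * I * z)))
      (multF (norm_q_lt_one hτ) (exp (-(2 * (Real.pi:ℂ) * I * z))))]

lemma theta_zero (τ : ℂ) : Theta τ 0 = 0 := by
  simp [Theta]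

lemma theta_per1 (τ z : ℂ) : Theta τ (z + 1) = -Theta τ z := by
  have e1 : exp (2 * (Real.pi : ℂ) * I * (z + 1)) = exp (2 * (Real.pi : ℂ) * I * z) := by
    rw [show 2 * (Real.pi : ℂ) * I * (z + 1) = 2 * (Real.pi : ℂ) * I * z + 2 * (Real.pi : ℂ) * I
      by ring, exp_add, exp_two_pi_mul_I, mul_one]
  have e2 : exp (-(2 * (Real.pi : ℂ) * I * (z + 1))) = exp (-(2 * (Real.pi : ℂ) * I * z)) := by
    rw [show -(2 * (Real.pi : ℂ) * I * (z + 1)) = -(2 * (Real.pi : ℂ) * I * z) +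
      -(2 * (Real.pi : ℂ) * I) by ring, exp_add]
    simp [exp_neg, exp_two_pi_mul_I]
  have e3 : exp ((Real.pi : ℂ) * I * (z + 1)) = -exp ((Real.pi : ℂ) * I * z) := by
    rw [show (Real.pi : ℂ) * I * (z + 1) = (Real.pi : ℂ) * I * z + (Real.pi : ℂ) * I by ring,
      exp_add, exp_pi_mul_I]
    ring
  have e4 : exp (-((Real.pi : ℂ) * I * (z + 1))) = -exp (-((Real.pi : ℂ) * I * z)) := by
    rw [show -((Real.pi : ℂ) * I * (z + 1)) = -((Real.pi : ℂ) * I * z) + -((Real.pi : ℂ) * I)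
      by ring, exp_add]
    simp [exp_neg, exp_pi_mul_I]
  unfold Theta
  rw [e1, e2, e3, e4]
  ring

lemma theta_step (τ z : ℂ) (hτ : 0 < τ.im) :
    Theta τ (z + τ) = -exp (-((Real.pi : ℂ) * I * τ) - 2 * (Real.pi : ℂ) * I * z) * Theta τ z := by
  have hq : ‖exp (2 * (Real.pi : ℂ) * I * τ)‖ < 1 := norm_q_lt_one hτ
  have hq0 : exp (2 * (Real.pi : ℂ) * I * τ) ≠ 0 := exp_ne_zero _
  have e1 : exp (2 * (Real.pi : ℂ) * I * (z + τ)) =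
      exp (2 * (Real.pi : ℂ) * I * τ) * exp (2 * (Real.pi : ℂ) * I * z) := by
    rw [← exp_add]; congr 1; ring
  have e2 : exp (-(2 * (Real.pi : ℂ) * I * (z + τ))) =
      (exp (2 * (Real.pi : ℂ) * I * τ))⁻¹ * (exp (2 * (Real.pi : ℂ) * I * z))⁻¹ := by
    rw [show -(2 * (Real.pi : ℂ) * I * (z + τ)) = -(2 * (Real.pi : ℂ) * I * τ) +
      -(2 * (Real.pi : ℂ) * I * z) by ring, exp_add, exp_neg, exp_neg]
  have f1 : exp ((Real.pi : ℂ) * I * (z + τ)) =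
      exp ((Real.pi : ℂ) * I * z) * exp ((Real.pi : ℂ) * I * τ) := by
    rw [← exp_add]; congr 1; ring
  have f2 : exp (-((Real.pi : ℂ) * I * (z + τ))) =
      (exp ((Real.pi : ℂ) * I * z))⁻¹ * (exp ((Real.pi : ℂ) * I * τ))⁻¹ := by
    rw [show -((Real.pi : ℂ) * I * (z + τ)) = -((Real.pi : ℂ) * I * z) +
      -((Real.pi : ℂ) * I * τ) by ring, exp_add, exp_neg, exp_neg]
  have e6 : exp (-((Real.pi : ℂ) * I * z)) = (exp ((Real.pi : ℂ) * I * z))⁻¹ := exp_neg _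
  have ex : exp (2 * (Real.pi : ℂ) * I * z) = exp ((Real.pi : ℂ) * I * z) *
      exp ((Real.pi : ℂ) * I * z) := by rw [← exp_add]; congr 1; ring
  have eq' : exp (2 * (Real.pi : ℂ) * I * τ) = exp ((Real.pi : ℂ) * I * τ) *
      exp ((Real.pi : ℂ) * I * τ) := by rw [← exp_add]; congr 1; ring
  have eE : exp (-((Real.pi : ℂ) * I * τ) - 2 * (Real.pi : ℂ) * I * z) =
      (exp ((Real.pi : ℂ) * I * τ))⁻¹ * (exp (2 * (Real.pi : ℂ) * I * z))⁻¹ := by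
    rw [show -((Real.pi : ℂ) * I * τ) - 2 * (Real.pi : ℂ) * I * z = -((Real.pi : ℂ) * I * τ) +
      -(2 * (Real.pi : ℂ) * I * z) by ring, exp_add, exp_neg, exp_neg]
  have hC : (∏' s : ℕ, (1 - exp (2 * (Real.pi : ℂ) * I * τ) ^ (s + 1) *
        exp (-(2 * (Real.pi : ℂ) * I * z)))) =
      ∏' s : ℕ, (1 - exp (2 * (Real.pi : ℂ) * I * τ) ^ (s + 1) *
        (exp (2 * (Real.pi : ℂ) * I * z))⁻¹) :=
    tprod_congr fun s => by rw [exp_neg]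
  have hS : (exp ((Real.pi : ℂ) * I * z) * exp ((Real.pi : ℂ) * I * τ) -
        (exp ((Real.pi : ℂ) * I * z))⁻¹ * (exp ((Real.pi : ℂ) * I * τ))⁻¹) *
        (1 - (exp (2 * (Real.pi : ℂ) * I * z))⁻¹) =
      -exp (-((Real.pi : ℂ) * I * τ) - 2 * (Real.pi : ℂ) * I * z) *
        ((exp ((Real.pi : ℂ) * I * z) - (exp ((Real.pi : ℂ) * I * z))⁻¹) *
         (1 - exp (2 * (Real.pi : ℂ) * I * τ) * exp (2 * (Real.pi : ℂ) * I * z))) := by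
    rw [eE, ex, eq']
    have ha := exp_ne_zero ((Real.pi : ℂ) * I * z)
    have hb := exp_ne_zero ((Real.pi : ℂ) * I * τ)
    field_simp
    ring
  have hA := prodShiftA hq (exp (2 * (Real.pi : ℂ) * I * z))
  have hB := prodShiftB hq hq0 ((exp (2 * (Real.pi : ℂ) * I * z))⁻¹)
  rw [thetaEq τ (z + τ) hτ, thetaEq τ z hτ, e1, e2, f1, f2, e6, hB, hC, hA]
  linear_combination (1 / (2 * (Real.pi : ℂ) * I) *
      (∏' s : ℕ, (1 - exp (2 * (Real.pi : ℂ) * I * τ) ^ (s + 1) *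
        (exp (2 * (Real.pi : ℂ) * I * τ) * exp (2 * (Real.pi : ℂ) * I * z)))) *
      (∏' s : ℕ, (1 - exp (2 * (Real.pi : ℂ) * I * τ) ^ (s + 1) *
        (exp (2 * (Real.pi : ℂ) * I * z))⁻¹)) *
      ((∏' s : ℕ, (1 - exp (2 * (Real.pi : ℂ) * I * τ) ^ (s + 1)))⁻¹) ^ 2) * hS

lemma theta_perm (τ : ℂ) (m : ℤ) (z : ℂ) : Theta τ (z + (m : ℂ)) = (-1 : ℂ) ^ m * Theta τ z := by
  induction m using Int.induction_on with
  | zero => simp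
  | succ k ih =>
    have harg : z + (((k : ℤ) + 1 : ℤ) : ℂ) = (z + ((k : ℤ) : ℂ)) + 1 := by push_cast; ring
    rw [harg, theta_per1, ih, zpow_add₀ (by norm_num : (-1:ℂ) ≠ 0)]
    ring
  | pred k ih =>
    have h1 := theta_per1 τ (z + ((-(k : ℤ) - 1 : ℤ) : ℂ))
    have h2 : (z + ((-(k : ℤ) - 1 : ℤ) : ℂ)) + 1 = z + ((-(k : ℤ) : ℤ) : ℂ) := by push_cast; ring
    rw [h2, ih] at h1
    have h3 : (-1:ℂ) ^ (-(k:ℤ)) = -(-1:ℂ) ^ (-(k:ℤ) - 1) := by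
      rw [show -(k:ℤ) = (-(k:ℤ) - 1) + 1 by ring, zpow_add₀ (by norm_num : (-1:ℂ) ≠ 0)]
      ring
    linear_combination h1 - Theta τ z * h3

lemma theta_pern (τ : ℂ) (hτ : 0 < τ.im) (n : ℤ) (z : ℂ) :
    Theta τ (z + (n : ℂ) * τ) = (-1 : ℂ) ^ n *
      (exp (-((Real.pi : ℂ) * I * (n : ℂ) ^ 2 * τ) - 2 * (Real.pi : ℂ) * I * (n : ℂ) * z) *
        Theta τ z) := by
  induction n using Int.induction_on with
  | zero => simp
  | succ k ih =>
    have harg : z + (((k : ℤ) + 1 : ℤ) : ℂ) * τ = (z + ((k : ℤ) : ℂ) * τ) + τ := by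
      push_cast; ring
    have h1 := theta_step τ (z + ((k : ℤ) : ℂ) * τ) hτ
    rw [harg, h1, ih]
    have hcomb : exp (-((Real.pi : ℂ) * I * τ) - 2 * (Real.pi : ℂ) * I * (z + ((k:ℤ):ℂ) * τ)) *
        exp (-((Real.pi : ℂ) * I * ((k:ℤ):ℂ) ^ 2 * τ) - 2 * (Real.pi : ℂ) * I * ((k:ℤ):ℂ) * z) =
        exp (-((Real.pi : ℂ) * I * (((k:ℤ)+1 : ℤ):ℂ) ^ 2 * τ) -
          2 * (Real.pi : ℂ) * I * (((k:ℤ)+1 : ℤ):ℂ) * z) := by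
      rw [← exp_add]; congr 1; push_cast; ring
    rw [zpow_add₀ (by norm_num : (-1:ℂ) ≠ 0), zpow_one]
    linear_combination (-(-1:ℂ) ^ (k:ℤ) * Theta τ z) * hcomb
  | pred k ih =>
    have harg : (z + ((-(k:ℤ) - 1 : ℤ) : ℂ) * τ) + τ = z + ((-(k:ℤ) : ℤ) : ℂ) * τ := by
      push_cast; ring
    have h1 := theta_step τ (z + ((-(k:ℤ) - 1 : ℤ) : ℂ) * τ) hτ
    rw [harg, ih] at h1
    have hcomb : exp (-((Real.pi : ℂ) * I * τ) -
          2 * (Real.pi : ℂ) * I * (z + ((-(k:ℤ) - 1 : ℤ):ℂ) * τ)) *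
        exp (-((Real.pi : ℂ) * I * ((-(k:ℤ) - 1 : ℤ):ℂ) ^ 2 * τ) -
          2 * (Real.pi : ℂ) * I * ((-(k:ℤ) - 1 : ℤ):ℂ) * z) =
        exp (-((Real.pi : ℂ) * I * ((-(k:ℤ) : ℤ):ℂ) ^ 2 * τ) -
          2 * (Real.pi : ℂ) * I * ((-(k:ℤ) : ℤ):ℂ) * z) := by
      rw [← exp_add]; congr 1; push_cast; ring
    have hE1 : -exp (-((Real.pi : ℂ) * I * τ) -
        2 * (Real.pi : ℂ) * I * (z + ((-(k:ℤ) - 1 : ℤ):ℂ) * τ)) ≠ 0 :=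
      neg_ne_zero.mpr (exp_ne_zero _)
    apply mul_left_cancel₀ hE1
    rw [← h1]
    have h3 : (-1:ℂ) ^ (-(k:ℤ)) = -(-1:ℂ) ^ (-(k:ℤ) - 1) := by
      rw [show -(k:ℤ) = (-(k:ℤ) - 1) + 1 by ring, zpow_add₀ (by norm_num : (-1:ℂ) ≠ 0)]
      ring
    rw [h3]
    linear_combination ((-1:ℂ) ^ (-(k:ℤ) - 1) * Theta τ z) * hcomb

lemma thetaQP (τ : ℂ) (hτ : 0 < τ.im) (m n : ℤ) (z : ℂ) :
    Theta τ (z + ((m : ℂ) + (n : ℂ) * τ)) = (-1 : ℂ) ^ (m + n) *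
      (exp (-((Real.pi : ℂ) * I * (n : ℂ) ^ 2 * τ) - 2 * (Real.pi : ℂ) * I * (n : ℂ) * z) *
        Theta τ z) := by
  have harg : z + ((m : ℂ) + (n : ℂ) * τ) = (z + (n : ℂ) * τ) + (m : ℂ) := by ring
  rw [harg, theta_perm τ m (z + (n : ℂ) * τ), theta_pern τ hτ n z,
    zpow_add₀ (by norm_num : (-1:ℂ) ≠ 0)]
  ring


lemma sub_one_ne {w : ℂ} (h : ‖w‖ < 1) : (1 : ℂ) - w ≠ 0 := by
  intro hc
  have : w = 1 := by linear_combination -hc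
  rw [this] at h
  simp at h

lemma contOn_P {q : ℂ} (hq : ‖q‖ < 1) (hq0 : q ≠ 0) :
    ∃ r > 0, ∃ P : ℂ → ℂ,
      (∀ z ∈ Metric.ball (0:ℂ) r,
        (∏' s : ℕ, ((1 - q ^ (s+1) * exp (2*(Real.pi:ℂ)*I*z)) *
          (1 - q ^ (s+1) * exp (-(2*(Real.pi:ℂ)*I*z))))) = P z) ∧
      ContinuousOn P (Metric.ball (0:ℂ) r) ∧
      P 0 = (∏' s : ℕ, (1 - q ^ (s+1))) ^ 2 := by
  have hq0' : (0 : ℝ) < ‖q‖ := norm_pos_iff.mpr hq0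
  set ρ : ℝ := (1 + ‖q‖) / 2 with hρdef
  have hρ1 : ρ < 1 := by rw [hρdef]; linarith
  have hρq : ‖q‖ < ρ := by rw [hρdef]; linarith
  have hρ0 : (0 : ℝ) < ρ := lt_trans hq0' hρq
  set r : ℝ := Real.log (ρ / ‖q‖) / (2 * Real.pi) with hrdef
  have h2π : (0 : ℝ) < 2 * Real.pi := by positivity
  have hr0 : 0 < r := div_pos (Real.log_pos (by rw [lt_div_iff₀ hq0']; linarith)) h2π
  have hexpr : Real.exp (2 * Real.pi * r) = ρ / ‖q‖ := by
    rw [hrdef, mul_div_cancel₀ _ (ne_of_gt h2π)]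
    exact Real.exp_log (div_pos hρ0 hq0')
  -- norms of the exponentials on the ball
  have hnorm : ∀ z ∈ Metric.ball (0:ℂ) r, ‖exp (2*(Real.pi:ℂ)*I*z)‖ ≤ ρ / ‖q‖ ∧
      ‖exp (-(2*(Real.pi:ℂ)*I*z))‖ ≤ ρ / ‖q‖ := by
    intro z hz
    have hzr : ‖z‖ < r := by simpa [Metric.mem_ball, dist_eq_norm] using hz
    have him : |z.im| ≤ ‖z‖ := Complex.abs_im_le_norm z
    have hre1 : (2*(Real.pi:ℂ)*I*z).re = -(2 * Real.pi * z.im) := by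
      simp [Complex.mul_re, Complex.mul_im]
    constructor
    · rw [Complex.norm_exp, hre1, ← hexpr]
      apply Real.exp_le_exp.mpr
      nlinarith [abs_le.mp him, Real.pi_pos]
    · rw [Complex.norm_exp, neg_re, hre1, neg_neg, ← hexpr]
      apply Real.exp_le_exp.mpr
      nlinarith [abs_le.mp him, Real.pi_pos]
  have hfb : ∀ c : ℂ, ‖c‖ ≤ ρ / ‖q‖ → ∀ s : ℕ, ‖q ^ (s+1) * c‖ ≤ ρ ^ (s+1) := by
    intro c hc s
    rw [norm_mul, norm_pow]
    calc ‖q‖ ^ (s+1) * ‖c‖ ≤ ‖q‖ ^ (s+1) * (ρ / ‖q‖) := by gcongr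
      _ = ‖q‖ ^ s * ρ := by
            rw [pow_succ, mul_assoc]; congr 1
            rw [mul_comm, div_mul_cancel₀ _ (ne_of_gt hq0')]
      _ ≤ ρ ^ s * ρ := by
            have := pow_le_pow_left₀ (norm_nonneg q) hρq.le s
            gcongr
      _ = ρ ^ (s+1) := (pow_succ ρ s).symm
  have hρs : ∀ s : ℕ, ρ ^ (s + 1) ≤ ρ := fun s =>
    pow_le_of_le_one hρ0.le hρ1.le (Nat.succ_ne_zero s)
  -- uniform bound on the logs
  have hlog : ∀ (s : ℕ) (w : ℂ), ‖w‖ ≤ ρ ^ (s+1) →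
      ‖Complex.log (1 - w)‖ ≤ (ρ * (ρ * (1-ρ)⁻¹ / 2 + 1)) * ρ ^ s := by
    intro s w hw
    have hw1 : ‖w‖ ≤ ρ := le_trans hw (hρs s)
    have hwlt : ‖w‖ < 1 := lt_of_le_of_lt hw1 hρ1
    have h1 : ‖Complex.log (1 - w)‖ ≤ ‖w‖ ^ 2 * (1 - ‖w‖)⁻¹ / 2 + ‖w‖ := by
      have := Complex.norm_log_one_add_le (z := -w) (by rwa [norm_neg])
      rw [norm_neg] at this
      simpa [sub_eq_add_neg] using this
    refine h1.trans ?_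
    have hinv : (1 - ‖w‖)⁻¹ ≤ (1 - ρ)⁻¹ := by
      apply inv_anti₀ (by linarith) (by linarith)
    have hsq : ‖w‖ ^ 2 ≤ ρ ^ (s+1) * ρ := by
      rw [sq]
      exact mul_le_mul hw hw1 (norm_nonneg w) (by positivity)
    have hnn : (0:ℝ) ≤ ‖w‖ := norm_nonneg w
    have h1ρ : (0:ℝ) < 1 - ρ := by linarith
    calc ‖w‖ ^ 2 * (1 - ‖w‖)⁻¹ / 2 + ‖w‖
        ≤ (ρ ^ (s+1) * ρ) * (1 - ρ)⁻¹ / 2 + ρ ^ (s+1) := by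
          have h2 : ‖w‖ ^ 2 * (1 - ‖w‖)⁻¹ ≤ (ρ ^ (s+1) * ρ) * (1 - ρ)⁻¹ :=
            mul_le_mul hsq hinv (inv_nonneg.mpr (by linarith)) (by positivity)
          linarith
      _ = (ρ * (ρ * (1-ρ)⁻¹ / 2 + 1)) * ρ ^ s := by rw [pow_succ]; ring
  have hsum : Summable (fun s : ℕ => (ρ * (ρ * (1-ρ)⁻¹ / 2 + 1)) * ρ ^ s) :=
    (summable_geometric_of_lt_one hρ0.le hρ1).mul_left _
  set A : ℂ → ℂ := fun z => ∑' s : ℕ, Complex.log (1 - q^(s+1) * exp (2*(Real.pi:ℂ)*I*z))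
    with hAdef
  set B : ℂ → ℂ := fun z => ∑' s : ℕ, Complex.log (1 - q^(s+1) * exp (-(2*(Real.pi:ℂ)*I*z)))
    with hBdef
  have hcont1 : Continuous fun z : ℂ => exp (2*(Real.pi:ℂ)*I*z) :=
    continuous_exp.comp (continuous_const.mul continuous_id)
  have hcont2 : Continuous fun z : ℂ => exp (-(2*(Real.pi:ℂ)*I*z)) :=
    continuous_exp.comp (continuous_const.mul continuous_id).neg
  have hslit : ∀ w : ℂ, ‖w‖ < 1 → (1 - w) ∈ Complex.slitPlane := by
    intro w hw
    rw [Complex.mem_slitPlane_iff]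
    left
    have : w.re ≤ ‖w‖ := Complex.re_le_norm w
    simp only [Complex.sub_re, Complex.one_re]
    linarith
  have hsmall : ∀ s : ℕ, ∀ c : ℂ, ‖c‖ ≤ ρ / ‖q‖ → ‖q ^ (s+1) * c‖ < 1 :=
    fun s c hc => lt_of_le_of_lt (hfb c hc s) (lt_of_le_of_lt (hρs s) hρ1)
  have hcontA : ContinuousOn A (Metric.ball (0:ℂ) r) := by
    refine continuousOn_tsum (fun s => ?_) hsum (fun s z hz => ?_)
    · exact ContinuousOn.clog (continuous_const.sub (continuous_const.mul hcont1)).continuousOn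
        fun z hz => hslit _ (hsmall s _ (hnorm z hz).1)
    · exact hlog s _ (hfb _ (hnorm z hz).1 s)
  have hcontB : ContinuousOn B (Metric.ball (0:ℂ) r) := by
    refine continuousOn_tsum (fun s => ?_) hsum (fun s z hz => ?_)
    · exact ContinuousOn.clog (continuous_const.sub (continuous_const.mul hcont2)).continuousOn
        fun z hz => hslit _ (hsmall s _ (hnorm z hz).2)
    · exact hlog s _ (hfb _ (hnorm z hz).2 s)
  refine ⟨r, hr0, fun z => exp (A z) * exp (B z), fun z hz => ?_, ?_, ?_⟩
  · have hne1 : ∀ s : ℕ, (1:ℂ) - q^(s+1) * exp (2*(Real.pi:ℂ)*I*z) ≠ 0 :=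
      fun s => sub_one_ne (hsmall s _ (hnorm z hz).1)
    have hne2 : ∀ s : ℕ, (1:ℂ) - q^(s+1) * exp (-(2*(Real.pi:ℂ)*I*z)) ≠ 0 :=
      fun s => sub_one_ne (hsmall s _ (hnorm z hz).2)
    rw [Multipliable.tprod_mul (multF hq _) (multF hq _), (hasProdExp hq _ hne1).tprod_eq,
      (hasProdExp hq _ hne2).tprod_eq]
  · exact (hcontA.cexp).mul (hcontB.cexp)
  · have e0 : exp (2*(Real.pi:ℂ)*I*(0:ℂ)) = 1 := by rw [mul_zero, exp_zero]
    have e0' : exp (-(2*(Real.pi:ℂ)*I*(0:ℂ))) = 1 := by rw [mul_zero, neg_zero, exp_zero]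
    have hne : ∀ s : ℕ, (1:ℂ) - q^(s+1) * 1 ≠ 0 := fun s => sub_one_ne (by
      rw [mul_one, norm_pow]
      exact pow_lt_one₀ (norm_nonneg q) hq (Nat.succ_ne_zero s))
    have hA0 : A 0 = ∑' s : ℕ, Complex.log (1 - q^(s+1) * 1) := by
      rw [hAdef]
      exact tsum_congr fun s => by rw [e0]
    have hB0 : B 0 = ∑' s : ℕ, Complex.log (1 - q^(s+1) * 1) := by
      rw [hBdef]
      exact tsum_congr fun s => by rw [e0']
    have hprod1 : (∏' s : ℕ, (1 - q^(s+1) * 1)) = ∏' s : ℕ, (1 - q^(s+1)) :=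
      tprod_congr fun s => by rw [mul_one]
    show exp (A 0) * exp (B 0) = (∏' s : ℕ, (1 - q^(s+1))) ^ 2
    rw [hA0, hB0, ← (hasProdExp hq 1 hne).tprod_eq, hprod1, sq]


lemma theta_deriv_zero (τ : ℂ) (hτ : 0 < τ.im) : HasDerivAt (Theta τ) 1 0 := by
  have hq : ‖exp (2*(Real.pi:ℂ)*I*τ)‖ < 1 := norm_q_lt_one hτ
  have hq0 : exp (2*(Real.pi:ℂ)*I*τ) ≠ 0 := exp_ne_zero _
  obtain ⟨r, hr0, P, hPeq, hPcont, hP0⟩ := contOn_P hq hq0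
  have hPi : (∏' s : ℕ, (1 - exp (2*(Real.pi:ℂ)*I*τ)^(s+1))) ≠ 0 := by
    have hne : ∀ s : ℕ, (1:ℂ) - exp (2*(Real.pi:ℂ)*I*τ)^(s+1) * 1 ≠ 0 := fun s => sub_one_ne (by
      rw [mul_one, norm_pow]; exact pow_lt_one₀ (norm_nonneg _) hq (Nat.succ_ne_zero s))
    have h1 := tprodF_ne hq 1 hne
    have h2 : (∏' s : ℕ, (1 - exp (2*(Real.pi:ℂ)*I*τ)^(s+1) * 1)) =
        ∏' s : ℕ, (1 - exp (2*(Real.pi:ℂ)*I*τ)^(s+1)) := tprod_congr fun s => by rw [mul_one]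
    rwa [h2] at h1
  have hsin0 : exp ((Real.pi:ℂ)*I*(0:ℂ)) - exp (-((Real.pi:ℂ)*I*(0:ℂ))) = 0 := by simp
  have hsin : HasDerivAt (fun z : ℂ => exp ((Real.pi:ℂ)*I*z) - exp (-((Real.pi:ℂ)*I*z)))
      (2*(Real.pi:ℂ)*I) 0 := by
    have h1 : HasDerivAt (fun z : ℂ => (Real.pi:ℂ)*I*z) ((Real.pi:ℂ)*I) 0 := by
      simpa using (hasDerivAt_id (0:ℂ)).const_mul ((Real.pi:ℂ)*I)
    have h4 := (h1.cexp).sub ((h1.neg).cexp)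
    refine h4.congr_deriv ?_
    simp
    ring
  rw [hasDerivAt_iff_tendsto_slope]
  have hslope : Tendsto (fun z : ℂ => (exp ((Real.pi:ℂ)*I*z) - exp (-((Real.pi:ℂ)*I*z)))/z)
      (𝓝[≠] (0:ℂ)) (𝓝 (2*(Real.pi:ℂ)*I)) := by
    have h := hasDerivAt_iff_tendsto_slope.mp hsin
    refine Tendsto.congr (fun z => ?_) h
    rw [slope_def_field, hsin0, sub_zero, sub_zero]
  have hPlim : Tendsto P (𝓝[≠] (0:ℂ)) (𝓝 (P 0)) :=
    ((hPcont.continuousAt (Metric.ball_mem_nhds 0 hr0)).tendsto).mono_left nhdsWithin_le_nhds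
  have hT : Tendsto (fun z : ℂ => (1/(2*(Real.pi:ℂ)*I)) *
      ((exp ((Real.pi:ℂ)*I*z) - exp (-((Real.pi:ℂ)*I*z)))/z) * P z *
      ((∏' s:ℕ, (1 - exp (2*(Real.pi:ℂ)*I*τ)^(s+1)))⁻¹)^2) (𝓝[≠] (0:ℂ))
      (𝓝 ((1/(2*(Real.pi:ℂ)*I)) * (2*(Real.pi:ℂ)*I) * P 0 *
        ((∏' s:ℕ, (1 - exp (2*(Real.pi:ℂ)*I*τ)^(s+1)))⁻¹)^2)) :=
    ((hslope.const_mul _).mul hPlim).mul_const _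
  have hval : (1/(2*(Real.pi:ℂ)*I)) * (2*(Real.pi:ℂ)*I) * P 0 *
      ((∏' s:ℕ, (1 - exp (2*(Real.pi:ℂ)*I*τ)^(s+1)))⁻¹)^2 = 1 := by
    rw [hP0]
    have hπ : ((Real.pi:ℂ)) ≠ 0 := Complex.ofReal_ne_zero.mpr Real.pi_ne_zero
    field_simp
  rw [← hval]
  refine hT.congr' ?_
  filter_upwards [self_mem_nhdsWithin,
    mem_nhdsWithin_of_mem_nhds (Metric.ball_mem_nhds (0:ℂ) hr0)] with z hz0 hzball
  have hz0' : z ≠ 0 := by simpa using hz0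
  rw [slope_def_field, theta_zero, sub_zero, sub_zero]
  unfold Theta
  rw [hPeq z hzball]
  field_simp

end ThetaAux

open Complex Filter Topology in
/-- for all integers `m, n`, the derivative of `Θ` at the lattice point
`m + nτ` equals `(-1)^(m+n)·exp(-πin²τ)`; in particular it is nonzero, so every zero of
`Θ` is simple. -/
theorem statement9 (τ : ℂ) (hτ : 0 < τ.im) (m n : ℤ) :
    HasDerivAt (Theta τ)
      ((-1 : ℂ) ^ (m + n) * exp (-((Real.pi : ℂ) * I * (n : ℂ) ^ 2 * τ)))
      ((m : ℂ) + (n : ℂ) * τ) ∧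
    (-1 : ℂ) ^ (m + n) * exp (-((Real.pi : ℂ) * I * (n : ℂ) ^ 2 * τ)) ≠ 0 := by
  constructor
  · have hlin : HasDerivAt (fun w : ℂ => -((Real.pi:ℂ)*I*(n:ℂ)^2*τ) - 2*(Real.pi:ℂ)*I*(n:ℂ)*w)
        (-(2*(Real.pi:ℂ)*I*(n:ℂ))) 0 := by
      simpa using ((hasDerivAt_id (0:ℂ)).const_mul
        (2*(Real.pi:ℂ)*I*(n:ℂ))).const_sub (-((Real.pi:ℂ)*I*(n:ℂ)^2*τ))
    have hmul := (hlin.cexp.mul (theta_deriv_zero τ hτ)).const_mul ((-1:ℂ)^(m+n))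
    have hφ : HasDerivAt (fun w : ℂ => (-1:ℂ)^(m+n) *
        (exp (-((Real.pi:ℂ)*I*(n:ℂ)^2*τ) - 2*(Real.pi:ℂ)*I*(n:ℂ)*w) * Theta τ w))
        ((-1:ℂ)^(m+n) * exp (-((Real.pi:ℂ)*I*(n:ℂ)^2*τ))) 0 := by
      refine hmul.congr_deriv ?_
      rw [theta_zero]
      simp
    have hfe : (fun w : ℂ => Theta τ (w + ((m:ℂ) + (n:ℂ)*τ))) = (fun w : ℂ => (-1:ℂ)^(m+n) *
        (exp (-((Real.pi:ℂ)*I*(n:ℂ)^2*τ) - 2*(Real.pi:ℂ)*I*(n:ℂ)*w) * Theta τ w)) :=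
      funext fun w => thetaQP τ hτ m n w
    have hg : HasDerivAt (fun w : ℂ => Theta τ (w + ((m:ℂ) + (n:ℂ)*τ)))
        ((-1:ℂ)^(m+n) * exp (-((Real.pi:ℂ)*I*(n:ℂ)^2*τ)))
        ((fun w : ℂ => w - ((m:ℂ) + (n:ℂ)*τ)) ((m:ℂ) + (n:ℂ)*τ)) := by
      show HasDerivAt _ _ (((m:ℂ) + (n:ℂ)*τ) - ((m:ℂ) + (n:ℂ)*τ))
      rw [sub_self, hfe]
      exact hφ
    have hinner : HasDerivAt (fun w : ℂ => w - ((m:ℂ) + (n:ℂ)*τ)) 1 ((m:ℂ) + (n:ℂ)*τ) :=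
      (hasDerivAt_id _).sub_const _
    have hcomp := HasDerivAt.comp (h := fun w : ℂ => w - ((m:ℂ) + (n:ℂ)*τ)) ((m:ℂ) + (n:ℂ)*τ) hg hinner
    have hco : ((fun w : ℂ => Theta τ (w + ((m:ℂ) + (n:ℂ)*τ))) ∘
        (fun w : ℂ => w - ((m:ℂ) + (n:ℂ)*τ))) = Theta τ :=
      funext fun w => by simp
    rwa [hco, mul_one] at hcomp
  · exact mul_ne_zero (zpow_ne_zero _ (by norm_num)) (exp_ne_zero _)
end

section
/- Fix ħ, λ ∈ ℂ with Θ(ħ − λ) ≠ 0. The function z ↦ (Θ(ħ)·Θ(z − λ) + Θ(λ)·Θ(ħ − z)) / (Θ(z)·Θ(ħ − λ)), which a priori has a pole at z = 0 coming from the simple zero of Θ(z) at 0, has a removable singularity at z = 0: the numerator Θ(ħ)Θ(z − λ) + Θ(λ)Θ(ħ − z) vanishes at z = 0, and the quotient extends to a function holomorphic in a neighborhood of z = 0. (This verifies the GKV residue condition ii) for the dynamical Demazure–Lusztig operator T_α.) -/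
set_option maxHeartbeats 1000000


open Complex

namespace Statement13Aux

open Filter Metric

noncomputable def qq (τ : ℂ) : ℂ := exp (2 * (Real.pi : ℂ) * I * τ)

noncomputable def gfac (τ : ℂ) (s : ℕ) (z : ℂ) : ℂ :=
  (1 - qq τ ^ (s + 1) * exp (2 * (Real.pi : ℂ) * I * z)) *
    (1 - qq τ ^ (s + 1) * exp (-(2 * (Real.pi : ℂ) * I * z)))

noncomputable def Ffun (τ : ℂ) (z : ℂ) : ℂ := ∏' s : ℕ, gfac τ s z

noncomputable def sineFn (z : ℂ) : ℂ :=
  exp ((Real.pi : ℂ) * I * z) - exp (-((Real.pi : ℂ) * I * z))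

noncomputable def Cc (τ : ℂ) : ℂ := ((∏' s : ℕ, (1 - qq τ ^ (s + 1)))⁻¹) ^ 2

lemma theta_eq (τ z : ℂ) :
    Theta τ z = (1 / (2 * (Real.pi : ℂ) * I)) * sineFn z * Ffun τ z * Cc τ := rfl

lemma norm_qq_lt_one {τ : ℂ} (hτ : 0 < τ.im) : ‖qq τ‖ < 1 := by
  rw [qq, Complex.norm_exp]
  have hre : (2 * (Real.pi : ℂ) * I * τ).re = -(2 * Real.pi * τ.im) := by
    simp [Complex.mul_re, Complex.mul_im]
    try ring
  rw [hre]
  apply Real.exp_lt_one_iff.mpr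
  have := Real.pi_pos
  nlinarith

lemma norm_term (τ : ℂ) (s : ℕ) (z : ℂ) :
    ‖qq τ ^ (s + 1) * exp (2 * (Real.pi : ℂ) * I * z)‖
      = ‖qq τ‖ ^ (s + 1) * Real.exp (-(2 * Real.pi * z.im)) := by
  simp only [norm_mul, norm_pow, Complex.norm_exp]
  congr 2
  simp [Complex.mul_re, Complex.mul_im]
  try ring

lemma norm_term_neg (τ : ℂ) (s : ℕ) (z : ℂ) :
    ‖qq τ ^ (s + 1) * exp (-(2 * (Real.pi : ℂ) * I * z))‖
      = ‖qq τ‖ ^ (s + 1) * Real.exp (2 * Real.pi * z.im) := by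
  simp only [norm_mul, norm_pow, Complex.norm_exp]
  congr 2
  simp [Complex.mul_re, Complex.mul_im]
  try ring

/-- Pointwise: product of `1 + f n` with small summable `f` is `exp` of a sum of logs. -/
lemma aux_pt (f : ℕ → ℂ) (hs : ∀ n, ‖f n‖ ≤ 1 / 2) (hsum : Summable fun n => ‖f n‖) :
    Multipliable (fun n => 1 + f n) ∧
      (∏' n, (1 + f n)) = exp (∑' n, log (1 + f n)) := by
  have hne : ∀ n, 1 + f n ≠ 0 := by
    intro n hn
    have h1 : f n = -1 := by linear_combination hn
    have h2 := hs n
    rw [h1] at h2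
    norm_num at h2
  have hlog : Summable fun n => log (1 + f n) := by
    apply Summable.of_norm_bounded (g := fun n => 3 / 2 * ‖f n‖) (hsum.mul_left _)
    intro n
    exact norm_log_one_add_half_le_self (hs n)
  have hp : HasProd (fun n => 1 + f n) (exp (∑' n, log (1 + f n))) := by
    have h1 := hlog.hasSum.cexp
    have h2 : (cexp ∘ fun n => log (1 + f n)) = fun n => 1 + f n :=
      funext fun n => exp_log (hne n)
    rwa [h2] at h1
  exact ⟨hp.multipliable, hp.tprod_eq⟩

lemma mem_slit {w : ℂ} (hw : ‖w‖ ≤ 1 / 2) : 1 + w ∈ slitPlane := by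
  rw [Complex.mem_slitPlane_iff]
  left
  have h1 : |w.re| ≤ ‖w‖ := Complex.abs_re_le_norm w
  simp only [Complex.add_re, Complex.one_re]
  have : -(1 / 2 : ℝ) ≤ w.re := by
    have := neg_abs_le w.re
    linarith
  linarith

/-- Weierstrass M-test for products `∏ (1 + f n z)`. -/
lemma aux_tprod {U : Set ℂ} (hU : IsOpen U) (f : ℕ → ℂ → ℂ)
    (hd : ∀ n, DifferentiableOn ℂ (f n) U) {u : ℕ → ℝ} (hu : Summable u)
    (hfu : ∀ n, ∀ z ∈ U, ‖f n z‖ ≤ u n)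
    (hsmall : ∀ n, ∀ z ∈ U, ‖f n z‖ ≤ 1 / 2) :
    DifferentiableOn ℂ (fun z => ∏' n, (1 + f n z)) U := by
  have hbound : ∀ (n : ℕ), ∀ x ∈ U, ‖log (1 + f n x)‖ ≤ 3 / 2 * u n := by
    intro n x hx
    calc ‖log (1 + f n x)‖ ≤ 3 / 2 * ‖f n x‖ :=
          norm_log_one_add_half_le_self (hsmall n x hx)
      _ ≤ 3 / 2 * u n := by
          have := hfu n x hx; nlinarith
  have hS : DifferentiableOn ℂ (fun z => ∑' n, log (1 + f n z)) U := by
    apply TendstoLocallyUniformlyOn.differentiableOn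
      (tendstoUniformlyOn_tsum (hu.mul_left (3 / 2)) hbound).tendstoLocallyUniformlyOn
      ?_ hU
    filter_upwards with t
    apply DifferentiableOn.fun_sum
    intro n _
    exact ((differentiableOn_const 1).add (hd n)).clog fun x hx => mem_slit (hsmall n x hx)
  apply DifferentiableOn.congr hS.cexp
  intro z hz
  exact (aux_pt (fun n => f n z) (fun n => hsmall n z hz)
    (hu.of_nonneg_of_le (fun _ => norm_nonneg _) (fun n => hfu n z hz))).2

lemma gfac_differentiable (τ : ℂ) (m : ℕ) :
    Differentiable ℂ (fun z => gfac τ m z) := by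
  unfold gfac
  fun_prop

/-- Main splitting lemma: near any point, `Ffun` is a finite product times a
nonvanishing differentiable tail. -/
lemma main_split {τ : ℂ} (hτ : 0 < τ.im) (z₀ : ℂ) :
    ∃ (S : ℕ) (U : Set ℂ), IsOpen U ∧ z₀ ∈ U ∧ DifferentiableOn ℂ (Ffun τ) U ∧
      ∀ z ∈ U,
        Ffun τ z = (∏ k ∈ Finset.range S, gfac τ k z) * ∏' n : ℕ, gfac τ (n + S) z ∧
        (∏' n : ℕ, gfac τ (n + S) z) ≠ 0 := by
  set q := ‖qq τ‖ with hqdef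
  have hq0 : 0 ≤ q := norm_nonneg _
  have hq1 : q < 1 := norm_qq_lt_one hτ
  set R : ℝ := |z₀.im| + 1 with hR
  set E : ℝ := Real.exp (2 * Real.pi * R) with hE
  have hE1 : 1 ≤ E := by
    rw [hE]
    apply Real.one_le_exp
    have := Real.pi_pos
    have : 0 ≤ |z₀.im| := abs_nonneg _
    positivity
  have hEpos : 0 < E := lt_of_lt_of_le one_pos hE1
  -- choose S
  obtain ⟨S, hS⟩ : ∃ S : ℕ, q ^ (S + 1) * E ≤ 1 / 8 := by
    have h1 : Tendsto (fun n : ℕ => q ^ n * E) atTop (nhds (0 * E)) :=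
      (tendsto_pow_atTop_nhds_zero_of_lt_one hq0 hq1).mul_const E
    rw [zero_mul] at h1
    have := (h1.eventually_le_const (by norm_num : (0:ℝ) < 1/8)).exists
    obtain ⟨S, hS⟩ := (h1.eventually (eventually_le_nhds (by norm_num : (0:ℝ) < 1/8))).exists
    exact ⟨S, by
      calc q ^ (S + 1) * E ≤ q ^ S * E := by
            have : q ^ (S + 1) ≤ q ^ S := pow_le_pow_of_le_one hq0 hq1.le (by omega)
            nlinarith
        _ ≤ 1 / 8 := hS⟩
  set U : Set ℂ := {z : ℂ | |z.im| < R} with hUdef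
  have hUopen : IsOpen U := isOpen_lt (Complex.continuous_im.abs) continuous_const
  have hz₀U : z₀ ∈ U := by
    simp only [hUdef, Set.mem_setOf_eq, hR]
    linarith
  -- uniform bounds on U
  have hterm : ∀ (m : ℕ), m ≥ S → ∀ z ∈ U,
      ‖qq τ ^ (m + 1) * exp (2 * (Real.pi : ℂ) * I * z)‖ ≤ q ^ (m + 1) * E ∧
      ‖qq τ ^ (m + 1) * exp (-(2 * (Real.pi : ℂ) * I * z))‖ ≤ q ^ (m + 1) * E := by
    intro m _ z hz
    have hzim : |z.im| ≤ R := le_of_lt hz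
    have hpi : (0:ℝ) < Real.pi := Real.pi_pos
    have hb1 : -(2 * Real.pi * z.im) ≤ 2 * Real.pi * R := by
      have h1 : -z.im ≤ |z.im| := neg_le_abs z.im
      nlinarith
    have hb2 : 2 * Real.pi * z.im ≤ 2 * Real.pi * R := by
      have h1 : z.im ≤ |z.im| := le_abs_self z.im
      nlinarith
    constructor
    · rw [norm_term]
      have := Real.exp_le_exp.mpr hb1
      have hqp : 0 ≤ q ^ (m + 1) := pow_nonneg hq0 _
      rw [hE]
      nlinarith
    · rw [norm_term_neg]
      have := Real.exp_le_exp.mpr hb2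
      have hqp : 0 ≤ q ^ (m + 1) := pow_nonneg hq0 _
      rw [hE]
      nlinarith
  have hqE : ∀ n : ℕ, q ^ (n + S + 1) * E ≤ 1 / 8 := by
    intro n
    calc q ^ (n + S + 1) * E ≤ q ^ (S + 1) * E := by
          have : q ^ (n + S + 1) ≤ q ^ (S + 1) := pow_le_pow_of_le_one hq0 hq1.le (by omega)
          nlinarith
      _ ≤ 1 / 8 := hS
  -- the tail terms
  set f : ℕ → ℂ → ℂ := fun n z => gfac τ (n + S) z - 1 with hfdef
  set u : ℕ → ℝ := fun n => 3 * (q ^ (n + S + 1) * E) with hudef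
  have hfu : ∀ n, ∀ z ∈ U, ‖f n z‖ ≤ u n := by
    intro n z hz
    obtain ⟨ha, hb⟩ := hterm (n + S) (by omega) z hz
    set a := qq τ ^ (n + S + 1) * exp (2 * (Real.pi : ℂ) * I * z) with hadef
    set b := qq τ ^ (n + S + 1) * exp (-(2 * (Real.pi : ℂ) * I * z)) with hbdef
    have heq : f n z = -a - b + a * b := by
      simp only [hfdef, gfac, hadef, hbdef]
      ring
    rw [heq]
    have h8 := hqE n
    have hcpos : (0:ℝ) ≤ q ^ (n + S + 1) * E := by positivity
    calc ‖-a - b + a * b‖ ≤ ‖-a - b‖ + ‖a * b‖ := norm_add_le _ _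
      _ ≤ ‖a‖ + ‖b‖ + ‖a‖ * ‖b‖ := by
          rw [norm_mul]
          have : ‖-a - b‖ ≤ ‖a‖ + ‖b‖ := by
            calc ‖-a - b‖ = ‖-(a + b)‖ := by ring_nf
              _ = ‖a + b‖ := norm_neg _
              _ ≤ ‖a‖ + ‖b‖ := norm_add_le _ _
          linarith
      _ ≤ u n := by
          simp only [hudef]
          nlinarith [norm_nonneg a, norm_nonneg b]
  have hsmall : ∀ n, ∀ z ∈ U, ‖f n z‖ ≤ 1 / 2 := by
    intro n z hz
    have := hfu n z hz
    have h8 := hqE n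
    simp only [hudef] at this
    linarith
  have hu : Summable u := by
    have : Summable fun n : ℕ => (3 * E * q ^ (S + 1)) * q ^ n :=
      (summable_geometric_of_lt_one hq0 hq1).mul_left _
    apply this.congr
    intro n
    simp only [hudef]
    rw [show n + S + 1 = n + (S + 1) by omega, pow_add]
    ring
  have hdf : ∀ n, DifferentiableOn ℂ (f n) U := fun n =>
    (((gfac_differentiable τ (n + S)).sub (differentiable_const 1))).differentiableOn
  have hDtail : DifferentiableOn ℂ (fun z => ∏' n : ℕ, gfac τ (n + S) z) U := by
    have := aux_tprod hUopen f hdf hu hfu hsmall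
    apply this.congr
    intro z hz
    apply tprod_congr
    intro n
    simp [hfdef]
  have hpt : ∀ z ∈ U,
      Ffun τ z = (∏ k ∈ Finset.range S, gfac τ k z) * ∏' n : ℕ, gfac τ (n + S) z ∧
      (∏' n : ℕ, gfac τ (n + S) z) ≠ 0 := by
    intro z hz
    have hap := aux_pt (fun n => f n z) (fun n => hsmall n z hz)
      (hu.of_nonneg_of_le (fun _ => norm_nonneg _) (fun n => hfu n z hz))
    have heq : (fun n : ℕ => 1 + f n z) = fun n => gfac τ (n + S) z := by
      funext n; simp [hfdef]
    rw [heq] at hap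
    have hfull : HasProd (fun s => gfac τ s z)
        ((∏ k ∈ Finset.range S, gfac τ k z) * ∏' n : ℕ, gfac τ (n + S) z) :=
      HasProd.prod_range_mul hap.1.hasProd
    refine ⟨hfull.tprod_eq, ?_⟩
    rw [hap.2]
    exact exp_ne_zero _
  refine ⟨S, U, hUopen, hz₀U, ?_, hpt⟩
  apply DifferentiableOn.congr
    (((Differentiable.fun_finsetProd (u := Finset.range S)
      (fun k _ => gfac_differentiable τ k)).differentiableOn).mul hDtail)
  intro z hz
  exact (hpt z hz).1

lemma Ffun_analyticAt {τ : ℂ} (hτ : 0 < τ.im) (z₀ : ℂ) : AnalyticAt ℂ (Ffun τ) z₀ := by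
  obtain ⟨S, U, hUopen, hz₀U, hdiff, _⟩ := main_split hτ z₀
  exact hdiff.analyticAt (hUopen.mem_nhds hz₀U)

lemma one_sub_pow_ne {τ : ℂ} (hτ : 0 < τ.im) (k : ℕ) : 1 - qq τ ^ (k + 1) ≠ 0 := by
  intro hk
  have h1 : qq τ ^ (k + 1) = 1 := by linear_combination -hk
  have h2 : ‖qq τ ^ (k + 1)‖ < 1 := by
    rw [norm_pow]
    exact pow_lt_one₀ (norm_nonneg _) (norm_qq_lt_one hτ) (Nat.succ_ne_zero k)
  rw [h1] at h2
  norm_num at h2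

lemma Ffun_zero_ne {τ : ℂ} (hτ : 0 < τ.im) : Ffun τ 0 ≠ 0 := by
  obtain ⟨S, U, hUopen, h0U, _, hpt⟩ := main_split hτ 0
  obtain ⟨heq, hne⟩ := hpt 0 h0U
  rw [heq]
  apply mul_ne_zero _ hne
  rw [Finset.prod_ne_zero_iff]
  intro k _
  have : gfac τ k 0 = (1 - qq τ ^ (k + 1)) * (1 - qq τ ^ (k + 1)) := by
    simp [gfac]
  rw [this]
  exact mul_ne_zero (one_sub_pow_ne hτ k) (one_sub_pow_ne hτ k)

lemma Cc_ne {τ : ℂ} (hτ : 0 < τ.im) : Cc τ ≠ 0 := by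
  set q := ‖qq τ‖ with hqdef
  have hq0 : 0 ≤ q := norm_nonneg _
  have hq1 : q < 1 := norm_qq_lt_one hτ
  obtain ⟨S, hS⟩ : ∃ S : ℕ, q ^ (S + 1) ≤ 1 / 2 := by
    obtain ⟨S, hS⟩ := ((tendsto_pow_atTop_nhds_zero_of_lt_one hq0 hq1).eventually
      (eventually_le_nhds (by norm_num : (0:ℝ) < 1/2))).exists
    exact ⟨S, le_trans (pow_le_pow_of_le_one hq0 hq1.le (Nat.le_succ S)) hS⟩
  have hpow : ∀ n : ℕ, q ^ (n + S + 1) ≤ 1 / 2 := fun n =>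
    le_trans (pow_le_pow_of_le_one hq0 hq1.le (by omega)) hS
  have hsumq : Summable fun n : ℕ => q ^ (n + S + 1) := by
    have : Summable fun n : ℕ => q ^ (S + 1) * q ^ n :=
      (summable_geometric_of_lt_one hq0 hq1).mul_left _
    apply this.congr
    intro n
    rw [show n + S + 1 = n + (S + 1) by omega, pow_add]
    ring
  have hap := aux_pt (fun n => -(qq τ ^ (n + S + 1)))
    (fun n => by rw [norm_neg, norm_pow, ← hqdef]; exact hpow n)
    (by
      apply hsumq.congr
      intro n
      rw [norm_neg, norm_pow, ← hqdef])
  have heq : (fun n : ℕ => 1 + -(qq τ ^ (n + S + 1)))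
      = fun n : ℕ => 1 - qq τ ^ ((n + S) + 1) := by
    funext n
    rw [show (n + S) + 1 = n + S + 1 by omega]
    ring
  rw [heq] at hap
  have hfull : HasProd (fun s : ℕ => 1 - qq τ ^ (s + 1))
      ((∏ k ∈ Finset.range S, (1 - qq τ ^ (k + 1))) * ∏' n : ℕ, (1 - qq τ ^ ((n + S) + 1))) :=
    HasProd.prod_range_mul hap.1.hasProd
  have hP : (∏' s : ℕ, (1 - qq τ ^ (s + 1))) ≠ 0 := by
    rw [hfull.tprod_eq]
    apply mul_ne_zero
    · rw [Finset.prod_ne_zero_iff]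
      exact fun k _ => one_sub_pow_ne hτ k
    · rw [hap.2]
      exact exp_ne_zero _
  exact pow_ne_zero _ (inv_ne_zero hP)

lemma sineFn_differentiable : Differentiable ℂ sineFn := by
  unfold sineFn
  fun_prop

lemma differentiable_analyticAt {f : ℂ → ℂ} (hf : Differentiable ℂ f) (z : ℂ) :
    AnalyticAt ℂ f z :=
  hf.differentiableOn.analyticAt (Filter.univ_mem)

lemma theta_analyticAt {τ : ℂ} (hτ : 0 < τ.im) (w : ℂ) : AnalyticAt ℂ (Theta τ) w := by
  have heq : Theta τ = fun z =>
      (1 / (2 * (Real.pi : ℂ) * I)) * sineFn z * Ffun τ z * Cc τ :=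
    funext fun z => theta_eq τ z
  rw [heq]
  exact ((analyticAt_const.mul
    (differentiable_analyticAt sineFn_differentiable w)).mul
      (Ffun_analyticAt hτ w)).mul analyticAt_const

lemma theta_odd (τ w : ℂ) : Theta τ (-w) = -Theta τ w := by
  rw [theta_eq, theta_eq]
  have h1 : sineFn (-w) = -sineFn w := by
    simp only [sineFn, mul_neg, neg_neg]
    ring
  have h2 : Ffun τ (-w) = Ffun τ w := by
    simp only [Ffun, gfac, mul_neg, neg_neg]
    exact tprod_congr fun s => mul_comm _ _
  rw [h1, h2]
  ring

lemma two_pi_I_ne : (2 : ℂ) * (Real.pi : ℂ) * I ≠ 0 := by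
  simp [Real.pi_ne_zero, I_ne_zero]

lemma sineFn_zero : sineFn 0 = 0 := by
  simp [sineFn]

lemma sine_hasDeriv : HasDerivAt sineFn (2 * (Real.pi : ℂ) * I) 0 := by
  have c := (Real.pi : ℂ) * I
  have h1 : HasDerivAt (fun z : ℂ => exp ((Real.pi : ℂ) * I * z))
      (exp ((Real.pi : ℂ) * I * 0) * ((Real.pi : ℂ) * I * 1)) 0 :=
    HasDerivAt.cexp ((hasDerivAt_id (0 : ℂ)).const_mul ((Real.pi : ℂ) * I))
  have h2 : HasDerivAt (fun z : ℂ => exp (-((Real.pi : ℂ) * I * z)))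
      (exp (-((Real.pi : ℂ) * I * 0)) * (-((Real.pi : ℂ) * I * 1))) 0 :=
    HasDerivAt.cexp (((hasDerivAt_id (0 : ℂ)).const_mul ((Real.pi : ℂ) * I)).neg)
  have h3 := h1.sub h2
  have : exp ((Real.pi : ℂ) * I * 0) * ((Real.pi : ℂ) * I * 1) -
      exp (-((Real.pi : ℂ) * I * 0)) * (-((Real.pi : ℂ) * I * 1)) = 2 * (Real.pi : ℂ) * I := by
    simp [Complex.exp_zero]
    ring
  rw [this] at h3
  exact h3

lemma analyticAt_dslope {f : ℂ → ℂ} {c : ℂ} (hf : AnalyticAt ℂ f c) :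
    AnalyticAt ℂ (dslope f c) c := by
  obtain ⟨p, hp⟩ := hf
  exact (hp.has_fpower_series_dslope_fslope).analyticAt

end Statement13Aux

/-- for fixed `ħ, λ` with `Θ(ħ-λ) ≠ 0`, the function
`z ↦ (Θ(ħ)Θ(z-λ) + Θ(λ)Θ(ħ-z)) / (Θ(z)Θ(ħ-λ))` has a removable singularity at `z = 0`:
the numerator vanishes at `z = 0`, and the quotient extends to a function holomorphic
in a neighborhood of `0`. (The GKV residue condition ii) for `T_α`.) -/
theorem statement13 (τ : ℂ) (hτ : 0 < τ.im) (h l : ℂ) (hd : Theta τ (h - l) ≠ 0) :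
    Theta τ h * Theta τ (0 - l) + Theta τ l * Theta τ (h - 0) = 0 ∧
    ∃ g : ℂ → ℂ, AnalyticAt ℂ g 0 ∧
      ∀ᶠ z in nhdsWithin 0 {(0 : ℂ)}ᶜ,
        g z = (Theta τ h * Theta τ (z - l) + Theta τ l * Theta τ (h - z)) /
              (Theta τ z * Theta τ (h - l)) := by
  open Statement13Aux in
  have key : Theta τ h * Theta τ (0 - l) + Theta τ l * Theta τ (h - 0) = 0 := by
    rw [zero_sub, sub_zero, theta_odd]
    ring
  refine ⟨key, ?_⟩
  set D := Theta τ (h - l) with hD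
  set N : ℂ → ℂ := fun z => Theta τ h * Theta τ (z - l) + Theta τ l * Theta τ (h - z) with hN
  have hNa : AnalyticAt ℂ N 0 := by
    have hi1 : AnalyticAt ℂ (fun z : ℂ => z - l) 0 := analyticAt_id.sub analyticAt_const
    have hi2 : AnalyticAt ℂ (fun z : ℂ => h - z) 0 := analyticAt_const.sub analyticAt_id
    have h1 : AnalyticAt ℂ (fun z : ℂ => Theta τ (z - l)) 0 :=
      AnalyticAt.comp (f := fun z : ℂ => z - l) (x := (0:ℂ))
        (theta_analyticAt hτ ((0:ℂ) - l)) hi1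
    have h2 : AnalyticAt ℂ (fun z : ℂ => Theta τ (h - z)) 0 :=
      AnalyticAt.comp (f := fun z : ℂ => h - z) (x := (0:ℂ))
        (theta_analyticAt hτ (h - (0:ℂ))) hi2
    exact (analyticAt_const.mul h1).add (analyticAt_const.mul h2)
  have hN0 : N 0 = 0 := key
  set φ : ℂ → ℂ := fun z =>
    (1 / (2 * (Real.pi : ℂ) * I)) * dslope sineFn 0 z * Ffun τ z * Cc τ with hφ
  have hφa : AnalyticAt ℂ φ 0 :=
    ((analyticAt_const.mul
      (analyticAt_dslope (differentiable_analyticAt sineFn_differentiable 0))).mul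
        (Ffun_analyticAt hτ 0)).mul analyticAt_const
  have hφ0 : φ 0 ≠ 0 := by
    have hds : dslope sineFn 0 0 = 2 * (Real.pi : ℂ) * I := by
      rw [dslope_same]
      exact sine_hasDeriv.deriv
    simp only [hφ, hds]
    have h1 : (1 / (2 * (Real.pi : ℂ) * I)) * (2 * (Real.pi : ℂ) * I) = 1 :=
      one_div_mul_cancel two_pi_I_ne
    rw [h1, one_mul]
    exact mul_ne_zero (Ffun_zero_ne hτ) (Cc_ne hτ)
  have hΘφ : ∀ z : ℂ, z ≠ 0 → Theta τ z = z * φ z := by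
    intro z hz
    rw [theta_eq]
    have hds : dslope sineFn 0 z = sineFn z / z := by
      rw [dslope_of_ne _ hz, slope_def_field, sineFn_zero, sub_zero, sub_zero]
    simp only [hφ, hds]
    have hcc : z * ((1 / (2 * (Real.pi : ℂ) * I)) * (sineFn z / z) * Ffun τ z * Cc τ)
        = (1 / (2 * (Real.pi : ℂ) * I)) * (z / z * sineFn z) * Ffun τ z * Cc τ := by
      ring
    rw [hcc, div_self hz, one_mul]
  refine ⟨fun z => dslope N 0 z / (φ z * D), ?_, ?_⟩
  · apply AnalyticAt.div (analyticAt_dslope hNa) (hφa.mul analyticAt_const)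
    exact mul_ne_zero hφ0 hd
  · filter_upwards [self_mem_nhdsWithin] with z hz
    have hz0 : z ≠ 0 := hz
    have hds : dslope N 0 z = N z / z := by
      rw [dslope_of_ne _ hz0, slope_def_field, hN0, sub_zero, sub_zero]
    rw [hds, hΘφ z hz0, div_div]
    rw [show z * (φ z * D) = z * φ z * D by ring]
end
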